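/- For every t ≥ 0 the first-derivative identity ∫_ℝ (∂_x u(x,t))² dx + 2ε ∫₀ᵗ ∫_ℝ (∂_x² u(x,s))² dx ds = ∫_ℝ u₀'(x)² dx − ∫₀ᵗ ∫_ℝ f''(u) (∂_x u)³ dx ds holds (identity (2.9) of the paper). -/

import Mathlib

open MeasureTheory Filter Set

noncomputable section KdVAux

/-- chain of spatial derivatives of a function of (time, space) -/
def Dxc (U : ℝ × ℝ → ℝ) : ℕ → ℝ × ℝ → ℝ
  | 0 => U
  | n + 1 => fun p => fderiv ℝ (Dxc U n) p (0, 1)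

lemma Dxc_zero (U : ℝ × ℝ → ℝ) : Dxc U 0 = U := rfl

lemma contDiff_Dxc {U : ℝ × ℝ → ℝ} (hU : ContDiff ℝ (⊤ : ℕ∞) U) : ∀ n, ContDiff ℝ (⊤ : ℕ∞) (Dxc U n)
  | 0 => hU
  | n + 1 => ((contDiff_Dxc hU n).fderiv_right (by simp)).clm_apply contDiff_const

lemma hasDerivAt_slice_x {V : ℝ × ℝ → ℝ} (hV : ContDiff ℝ (⊤ : ℕ∞) V) (s x : ℝ) :
    HasDerivAt (fun y => V (s, y)) (fderiv ℝ V (s, x) (0, 1)) x := by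
  have h1 : HasDerivAt (fun y : ℝ => ((s, y) : ℝ × ℝ)) (((0 : ℝ), (1 : ℝ))) x :=
    (hasDerivAt_const x s).prodMk (hasDerivAt_id x)
  exact (hV.differentiable (by simp) (s, x)).hasFDerivAt.comp_hasDerivAt x h1

lemma hasDerivAt_slice_t {V : ℝ × ℝ → ℝ} (hV : ContDiff ℝ (⊤ : ℕ∞) V) (s x : ℝ) :
    HasDerivAt (fun r => V (r, x)) (fderiv ℝ V (s, x) (1, 0)) s := by
  have h1 : HasDerivAt (fun r : ℝ => ((r, x) : ℝ × ℝ)) (((1 : ℝ), (0 : ℝ))) s :=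
    (hasDerivAt_id s).prodMk (hasDerivAt_const s x)
  exact (hV.differentiable (by simp) (s, x)).hasFDerivAt.comp_hasDerivAt s h1

lemma symm2 {U : ℝ × ℝ → ℝ} (hU : ContDiff ℝ (⊤ : ℕ∞) U) (p : ℝ × ℝ) :
    fderiv ℝ (fun q => fderiv ℝ U q (0, 1)) p (1, 0)
      = fderiv ℝ (fun q => fderiv ℝ U q (1, 0)) p (0, 1) := by
  have hd : DifferentiableAt ℝ (fderiv ℝ U) p :=
    ((hU.fderiv_right (m := (⊤ : ℕ∞)) (by simp)).differentiable (by simp)) p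
  have e1 : ∀ v : ℝ × ℝ, fderiv ℝ (fun q => fderiv ℝ U q v) p
      = (ContinuousLinearMap.apply ℝ ℝ v).comp (fderiv ℝ (fderiv ℝ U) p) := fun v =>
    (((ContinuousLinearMap.apply ℝ ℝ v).hasFDerivAt).comp p hd.hasFDerivAt).fderiv
  rw [e1, e1]
  simp only [ContinuousLinearMap.coe_comp', Function.comp_apply,
    ContinuousLinearMap.apply_apply]
  exact (hU.contDiffAt.isSymmSndFDerivAt (by rw [minSmoothness_of_isRCLikeNormedField]; exact WithTop.coe_le_coe.mpr le_top)) _ _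

lemma integrable_of_decay {g : ℝ → ℝ} (hg : Continuous g) {K : ℝ}
    (h : ∀ x : ℝ, |g x| ≤ K * (1 + x ^ 2)⁻¹) : Integrable g := by
  refine (integrable_inv_one_add_sq.const_mul K).mono' hg.aestronglyMeasurable
    (ae_of_all _ fun x => ?_)
  simpa [Real.norm_eq_abs] using h x

lemma decay_mul_bound {x a b A A' Bb : ℝ} (ha : |a| ≤ A) (ha' : x ^ 2 * |a| ≤ A')
    (hb : |b| ≤ Bb) : |a * b| ≤ (A + A') * Bb * (1 + x ^ 2)⁻¹ := by
  have h1 : (0 : ℝ) < 1 + x ^ 2 := by positivity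
  rw [show (A + A') * Bb * (1 + x ^ 2)⁻¹ = ((A + A') * Bb) / (1 + x ^ 2) by ring,
    le_div_iff₀ h1, abs_mul]
  have h2 : (0:ℝ) ≤ |a| + x ^ 2 * |a| := by positivity
  have := mul_le_mul (add_le_add ha ha') hb (abs_nonneg b) (h2.trans (add_le_add ha ha'))
  nlinarith [abs_nonneg a, abs_nonneg b, sq_nonneg x, mul_nonneg (sq_nonneg x) (abs_nonneg a)]

lemma iteratedDeriv_eq_Dxc {u : ℝ → ℝ → ℝ}
    (hu : ContDiff ℝ (⊤ : ℕ∞) (fun p : ℝ × ℝ => u p.1 p.2)) (n : ℕ) (s : ℝ) :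
    iteratedDeriv n (u s) = fun x => Dxc (fun p : ℝ × ℝ => u p.1 p.2) n (s, x) := by
  induction n with
  | zero => rfl
  | succ n ih =>
    funext x
    rw [iteratedDeriv_succ, ih]
    exact (hasDerivAt_slice_x (contDiff_Dxc hu n) s x).deriv

theorem main_aux (f : ℝ → ℝ) (hf : ContDiff ℝ (⊤ : ℕ∞) f)
    (ε δ : ℝ) (hε : 0 < ε) (hδ : 0 < δ)
    (U : ℝ × ℝ → ℝ) (hU : ContDiff ℝ (⊤ : ℕ∞) U)
    (hpde : ∀ s ≥ (0:ℝ), ∀ x : ℝ, fderiv ℝ U (s, x) (1, 0)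
      = -(deriv f (U (s, x)) * Dxc U 1 (s, x)) + ε * Dxc U 2 (s, x) + δ * Dxc U 3 (s, x))
    (hdec : ∀ (n m : ℕ) (T : ℝ), ∃ C : ℝ, ∀ s ∈ Set.Icc (0:ℝ) T, ∀ x : ℝ,
      |x| ^ m * |Dxc U n (s, x)| ≤ C)
    (t : ℝ) (ht : 0 ≤ t) :
    (∫ x : ℝ, (Dxc U 1 (t, x)) ^ 2)
        + 2 * ε * ∫ s in (0:ℝ)..t, ∫ x : ℝ, (Dxc U 2 (s, x)) ^ 2
      = (∫ x : ℝ, (Dxc U 1 (0, x)) ^ 2)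
        - ∫ s in (0:ℝ)..t, ∫ x : ℝ, deriv (deriv f) (U (s, x)) * (Dxc U 1 (s, x)) ^ 3 := by
  have hDn : ∀ n, ContDiff ℝ (⊤ : ℕ∞) (Dxc U n) := contDiff_Dxc hU
  have hW : ContDiff ℝ (⊤ : ℕ∞) (fun p : ℝ × ℝ => fderiv ℝ U p (1, 0)) :=
    (hU.fderiv_right (by simp)).clm_apply contDiff_const
  have hdx : ∀ (n : ℕ) (s x : ℝ),
      HasDerivAt (fun y => Dxc U n (s, y)) (Dxc U (n + 1) (s, x)) x :=
    fun n s x => hasDerivAt_slice_x (hDn n) s x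
  have hdw : ∀ s x : ℝ, HasDerivAt (fun y => fderiv ℝ U (s, y) (1, 0))
      (fderiv ℝ (fun p : ℝ × ℝ => fderiv ℝ U p (1, 0)) (s, x) (0, 1)) x :=
    fun s x => hasDerivAt_slice_x hW s x
  have ht1 : ∀ s x : ℝ, HasDerivAt (fun r => Dxc U 1 (r, x))
      (fderiv ℝ (Dxc U 1) (s, x) (1, 0)) s :=
    fun s x => hasDerivAt_slice_t (hDn 1) s x
  have hsymm : ∀ p : ℝ × ℝ, fderiv ℝ (Dxc U 1) p (1, 0)
      = fderiv ℝ (fun q : ℝ × ℝ => fderiv ℝ U q (1, 0)) p (0, 1) := fun p => symm2 hU p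
  have hf1 : ContDiff ℝ (⊤ : ℕ∞) (deriv f) := by
    have h : ContDiff ℝ (⊤ : ℕ∞) (fun y => fderiv ℝ f y 1) :=
      (hf.fderiv_right (by simp)).clm_apply contDiff_const
    have e : (fun y => fderiv ℝ f y 1) = deriv f := funext fun y => fderiv_apply_one_eq_deriv
    rwa [e] at h
  have hf2 : ContDiff ℝ (⊤ : ℕ∞) (deriv (deriv f)) := by
    have h : ContDiff ℝ (⊤ : ℕ∞) (fun y => fderiv ℝ (deriv f) y 1) :=
      (hf1.fderiv_right (by simp)).clm_apply contDiff_const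
    have e : (fun y => fderiv ℝ (deriv f) y 1) = deriv (deriv f) := funext fun y => fderiv_apply_one_eq_deriv
    rwa [e] at h
  -- differentiated PDE
  have hstar' : ∀ s, 0 ≤ s → ∀ x : ℝ,
      fderiv ℝ (fun q : ℝ × ℝ => fderiv ℝ U q (1, 0)) (s, x) (0, 1)
        = -(deriv (deriv f) (U (s, x)) * Dxc U 1 (s, x) ^ 2
              + deriv f (U (s, x)) * Dxc U 2 (s, x))
          + ε * Dxc U 3 (s, x) + δ * Dxc U 4 (s, x) := by
    intro s hs x
    have hfun : (fun y => fderiv ℝ U (s, y) (1, 0)) = fun y =>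
        -(deriv f (U (s, y)) * Dxc U 1 (s, y)) + ε * Dxc U 2 (s, y) + δ * Dxc U 3 (s, y) :=
      funext fun y => hpde s hs y
    have hL : HasDerivAt (fun y => fderiv ℝ U (s, y) (1, 0))
        (fderiv ℝ (fun q : ℝ × ℝ => fderiv ℝ U q (1, 0)) (s, x) (0, 1)) x := hdw s x
    rw [hfun] at hL
    have hcomp : HasDerivAt (fun y => deriv f (U (s, y)))
        (deriv (deriv f) (U (s, x)) * Dxc U 1 (s, x)) x := by
      have hux : HasDerivAt (fun y => U (s, y)) (Dxc U 1 (s, x)) x := hdx 0 s x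
      exact ((hf1.differentiable (by simp) (U (s, x))).hasDerivAt).comp x hux
    have hR : HasDerivAt (fun y =>
        -(deriv f (U (s, y)) * Dxc U 1 (s, y)) + ε * Dxc U 2 (s, y) + δ * Dxc U 3 (s, y))
        (-(deriv (deriv f) (U (s, x)) * Dxc U 1 (s, x) * Dxc U 1 (s, x)
            + deriv f (U (s, x)) * Dxc U 2 (s, x))
          + ε * Dxc U 3 (s, x) + δ * Dxc U 4 (s, x)) x :=
      (((hcomp.mul (hdx 1 s x)).neg).add ((hdx 2 s x).const_mul ε)).add
        ((hdx 3 s x).const_mul δ)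
    rw [hL.unique hR]; ring
  -- constants
  obtain ⟨C0, hC0⟩ := hdec 0 0 t
  obtain ⟨C1, hC1⟩ := hdec 1 0 t
  obtain ⟨C1', hC1r⟩ := hdec 1 2 t
  obtain ⟨C2, hC2⟩ := hdec 2 0 t
  obtain ⟨C2', hC2r⟩ := hdec 2 2 t
  obtain ⟨C3, hC3⟩ := hdec 3 0 t
  obtain ⟨C4, hC4⟩ := hdec 4 0 t
  have h0t : (0:ℝ) ∈ Icc (0:ℝ) t := ⟨le_refl 0, ht⟩
  have B0 : ∀ s ∈ Icc (0:ℝ) t, ∀ x : ℝ, |U (s, x)| ≤ C0 := fun s hs x => by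
    simpa [Dxc_zero] using hC0 s hs x
  have B1 : ∀ s ∈ Icc (0:ℝ) t, ∀ x : ℝ, |Dxc U 1 (s, x)| ≤ C1 := fun s hs x => by
    simpa using hC1 s hs x
  have B1' : ∀ s ∈ Icc (0:ℝ) t, ∀ x : ℝ, x ^ 2 * |Dxc U 1 (s, x)| ≤ C1' := fun s hs x => by
    simpa [sq_abs] using hC1r s hs x
  have B2 : ∀ s ∈ Icc (0:ℝ) t, ∀ x : ℝ, |Dxc U 2 (s, x)| ≤ C2 := fun s hs x => by
    simpa using hC2 s hs x
  have B2' : ∀ s ∈ Icc (0:ℝ) t, ∀ x : ℝ, x ^ 2 * |Dxc U 2 (s, x)| ≤ C2' := fun s hs x => by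
    simpa [sq_abs] using hC2r s hs x
  have B3 : ∀ s ∈ Icc (0:ℝ) t, ∀ x : ℝ, |Dxc U 3 (s, x)| ≤ C3 := fun s hs x => by
    simpa using hC3 s hs x
  have B4 : ∀ s ∈ Icc (0:ℝ) t, ∀ x : ℝ, |Dxc U 4 (s, x)| ≤ C4 := fun s hs x => by
    simpa using hC4 s hs x
  have hC0n : 0 ≤ C0 := (abs_nonneg _).trans (B0 0 h0t 0)
  have hC1n : 0 ≤ C1 := (abs_nonneg _).trans (B1 0 h0t 0)
  have hC2n : 0 ≤ C2 := (abs_nonneg _).trans (B2 0 h0t 0)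
  have hC3n : 0 ≤ C3 := (abs_nonneg _).trans (B3 0 h0t 0)
  have hC4n : 0 ≤ C4 := (abs_nonneg _).trans (B4 0 h0t 0)
  have hC1n' : 0 ≤ C1' := le_trans (by positivity) (B1' 0 h0t 0)
  have hC2n' : 0 ≤ C2' := le_trans (by positivity) (B2' 0 h0t 0)
  -- bound on f' and f'' on the range of U
  have h0mem : (0:ℝ) ∈ Icc (-C0) C0 := mem_Icc.mpr ⟨neg_nonpos.2 hC0n, hC0n⟩
  obtain ⟨c, hcbd⟩ := isCompact_Icc.exists_bound_of_continuousOn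
    ((hf1.continuous).continuousOn (s := Icc (-C0) C0))
  have hc : ∀ y ∈ Icc (-C0) C0, |deriv f y| ≤ c := fun y hy => by
    have := hcbd y hy; rwa [Real.norm_eq_abs] at this
  have hcn : 0 ≤ c := (abs_nonneg _).trans (hc 0 h0mem)
  obtain ⟨M2, hM2bd⟩ := isCompact_Icc.exists_bound_of_continuousOn
    ((hf2.continuous).continuousOn (s := Icc (-C0) C0))
  have hM2 : ∀ y ∈ Icc (-C0) C0, |deriv (deriv f) y| ≤ M2 := fun y hy => by
    have := hM2bd y hy; rwa [Real.norm_eq_abs] at this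
  have hM2n : 0 ≤ M2 := (abs_nonneg _).trans (hM2 0 h0mem)
  have hmem : ∀ s ∈ Icc (0:ℝ) t, ∀ x : ℝ, U (s, x) ∈ Icc (-C0) C0 := fun s hs x =>
    ⟨neg_le_of_abs_le (B0 s hs x), le_of_abs_le (B0 s hs x)⟩
  have Bf' : ∀ s ∈ Icc (0:ℝ) t, ∀ x : ℝ, |deriv f (U (s, x))| ≤ c := fun s hs x =>
    hc _ (hmem s hs x)
  have Bf'' : ∀ s ∈ Icc (0:ℝ) t, ∀ x : ℝ, |deriv (deriv f) (U (s, x))| ≤ M2 := fun s hs x =>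
    hM2 _ (hmem s hs x)
  -- bound on the time derivative W and on the mixed derivative M
  obtain ⟨CW, hCWn, hCW⟩ : ∃ CW : ℝ, 0 ≤ CW ∧ ∀ s ∈ Icc (0:ℝ) t, ∀ x : ℝ,
      |fderiv ℝ U (s, x) (1, 0)| ≤ CW := by
    refine ⟨c * C1 + ε * C2 + δ * C3, by positivity, fun s hs x => ?_⟩
    rw [hpde s hs.1 x]
    refine (abs_add_le _ _).trans (le_trans (add_le_add_left (abs_add_le _ _) _) ?_)
    have t1 : |-(deriv f (U (s, x)) * Dxc U 1 (s, x))| ≤ c * C1 := by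
      rw [abs_neg, abs_mul]
      exact mul_le_mul (Bf' s hs x) (B1 s hs x) (abs_nonneg _) hcn
    have t2 : |ε * Dxc U 2 (s, x)| ≤ ε * C2 := by
      rw [abs_mul, abs_of_pos hε]
      exact mul_le_mul_of_nonneg_left (B2 s hs x) hε.le
    have t3 : |δ * Dxc U 3 (s, x)| ≤ δ * C3 := by
      rw [abs_mul, abs_of_pos hδ]
      exact mul_le_mul_of_nonneg_left (B3 s hs x) hδ.le
    linarith
  obtain ⟨CM, hCMn, hCM⟩ : ∃ CM : ℝ, 0 ≤ CM ∧ ∀ s ∈ Icc (0:ℝ) t, ∀ x : ℝ,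
      |fderiv ℝ (Dxc U 1) (s, x) (1, 0)| ≤ CM := by
    refine ⟨(M2 * (C1 * C1) + c * C2) + ε * C3 + δ * C4, by positivity, fun s hs x => ?_⟩
    rw [hsymm (s, x), hstar' s hs.1 x]
    refine (abs_add_le _ _).trans (le_trans (add_le_add_left (abs_add_le _ _) _) ?_)
    have t1 : |-(deriv (deriv f) (U (s, x)) * Dxc U 1 (s, x) ^ 2
        + deriv f (U (s, x)) * Dxc U 2 (s, x))| ≤ M2 * (C1 * C1) + c * C2 := by
      rw [abs_neg]
      refine (abs_add_le _ _).trans (add_le_add ?_ ?_)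
      · rw [abs_mul, abs_pow]
        have h2 : |Dxc U 1 (s, x)| ^ 2 ≤ C1 * C1 := by
          rw [pow_two]
          exact mul_le_mul (B1 s hs x) (B1 s hs x) (abs_nonneg _) hC1n
        exact mul_le_mul (Bf'' s hs x) h2 (by positivity) hM2n
      · rw [abs_mul]
        exact mul_le_mul (Bf' s hs x) (B2 s hs x) (abs_nonneg _) hcn
    have t2 : |ε * Dxc U 3 (s, x)| ≤ ε * C3 := by
      rw [abs_mul, abs_of_pos hε]
      exact mul_le_mul_of_nonneg_left (B3 s hs x) hε.le
    have t3 : |δ * Dxc U 4 (s, x)| ≤ δ * C4 := by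
      rw [abs_mul, abs_of_pos hδ]
      exact mul_le_mul_of_nonneg_left (B4 s hs x) hδ.le
    linarith
  -- continuity in x of all the players
  have contDx : ∀ (n : ℕ) (s : ℝ), Continuous fun x : ℝ => Dxc U n (s, x) :=
    fun n s => (hDn n).continuous.comp (continuous_const.prodMk continuous_id)
  have contWx : ∀ s : ℝ, Continuous fun x : ℝ => fderiv ℝ U (s, x) (1, 0) :=
    fun s => hW.continuous.comp (continuous_const.prodMk continuous_id)
  have contE : ∀ s : ℝ, Continuous fun x : ℝ =>
      fderiv ℝ (fun q : ℝ × ℝ => fderiv ℝ U q (1, 0)) (s, x) (0, 1) := fun s =>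
    (ContDiff.continuous (n := ((⊤ : ℕ∞) : WithTop ℕ∞))
      ((hW.fderiv_right (m := (⊤ : ℕ∞)) (by simp)).clm_apply contDiff_const)).comp
      (continuous_const.prodMk continuous_id)
  have contM : ∀ s : ℝ, Continuous fun x : ℝ => fderiv ℝ (Dxc U 1) (s, x) (1, 0) := fun s =>
    (ContDiff.continuous (n := ((⊤ : ℕ∞) : WithTop ℕ∞))
      (((hDn 1).fderiv_right (m := (⊤ : ℕ∞)) (by simp)).clm_apply contDiff_const)).comp
      (continuous_const.prodMk continuous_id)
  -- the key identity, for each time s in [0, t]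
  have key : ∀ s ∈ Icc (0:ℝ) t,
      (∫ x : ℝ, 2 * Dxc U 1 (s, x) * fderiv ℝ (Dxc U 1) (s, x) (1, 0))
        = -(2 * ε) * (∫ x : ℝ, (Dxc U 2 (s, x)) ^ 2)
          - ∫ x : ℝ, deriv (deriv f) (U (s, x)) * (Dxc U 1 (s, x)) ^ 3 := by
    intro s hs
    have hs0 : 0 ≤ s := hs.1
    -- integrability of all integrands appearing
    have i_d1w : Integrable (fun x : ℝ => Dxc U 1 (s, x) * fderiv ℝ U (s, x) (1, 0)) := by
      refine integrable_of_decay ((contDx 1 s).mul (contWx s)) (K := (C1 + C1') * CW)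
        fun x => ?_
      exact decay_mul_bound (B1 s hs x) (B1' s hs x) (hCW s hs x)
    have i_d2w : Integrable (fun x : ℝ => Dxc U 2 (s, x) * fderiv ℝ U (s, x) (1, 0)) := by
      refine integrable_of_decay ((contDx 2 s).mul (contWx s)) (K := (C2 + C2') * CW)
        fun x => ?_
      exact decay_mul_bound (B2 s hs x) (B2' s hs x) (hCW s hs x)
    have i_d1e : Integrable (fun x : ℝ => Dxc U 1 (s, x) *
        fderiv ℝ (fun q : ℝ × ℝ => fderiv ℝ U q (1, 0)) (s, x) (0, 1)) := by
      refine integrable_of_decay ((contDx 1 s).mul (contE s)) (K := (C1 + C1') * CM)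
        fun x => ?_
      refine decay_mul_bound (B1 s hs x) (B1' s hs x) ?_
      rw [← hsymm (s, x)]
      exact hCM s hs x
    have i_d1sq : Integrable (fun x : ℝ => (Dxc U 1 (s, x)) ^ 2) := by
      refine integrable_of_decay ((contDx 1 s).pow 2) (K := (C1 + C1') * C1) fun x => ?_
      rw [pow_two]
      exact decay_mul_bound (B1 s hs x) (B1' s hs x) (B1 s hs x)
    have i_d2sq : Integrable (fun x : ℝ => (Dxc U 2 (s, x)) ^ 2) := by
      refine integrable_of_decay ((contDx 2 s).pow 2) (K := (C2 + C2') * C2) fun x => ?_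
      rw [pow_two]
      exact decay_mul_bound (B2 s hs x) (B2' s hs x) (B2 s hs x)
    have i_d2d3 : Integrable (fun x : ℝ => Dxc U 2 (s, x) * Dxc U 3 (s, x)) := by
      refine integrable_of_decay ((contDx 2 s).mul (contDx 3 s)) (K := (C2 + C2') * C3)
        fun x => ?_
      exact decay_mul_bound (B2 s hs x) (B2' s hs x) (B3 s hs x)
    have i_fd1d2 : Integrable (fun x : ℝ =>
        deriv f (U (s, x)) * (Dxc U 1 (s, x) * Dxc U 2 (s, x))) := by
      refine integrable_of_decay ((hf1.continuous.comp (contDx 0 s)).mul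
        ((contDx 1 s).mul (contDx 2 s))) (K := (C1 + C1') * (c * C2)) fun x => ?_
      have e : deriv f (U (s, x)) * (Dxc U 1 (s, x) * Dxc U 2 (s, x))
          = Dxc U 1 (s, x) * (deriv f (U (s, x)) * Dxc U 2 (s, x)) := by ring
      rw [e]
      refine decay_mul_bound (B1 s hs x) (B1' s hs x) ?_
      rw [abs_mul]
      exact mul_le_mul (Bf' s hs x) (B2 s hs x) (abs_nonneg _) hcn
    have i_fd1sq : Integrable (fun x : ℝ => deriv f (U (s, x)) * (Dxc U 1 (s, x)) ^ 2) := by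
      refine integrable_of_decay ((hf1.continuous.comp (contDx 0 s)).mul
        ((contDx 1 s).pow 2)) (K := (C1 + C1') * (c * C1)) fun x => ?_
      have e : deriv f (U (s, x)) * (Dxc U 1 (s, x)) ^ 2
          = Dxc U 1 (s, x) * (deriv f (U (s, x)) * Dxc U 1 (s, x)) := by ring
      rw [e]
      refine decay_mul_bound (B1 s hs x) (B1' s hs x) ?_
      rw [abs_mul]
      exact mul_le_mul (Bf' s hs x) (B1 s hs x) (abs_nonneg _) hcn
    have i_B : Integrable (fun x : ℝ =>
        deriv (deriv f) (U (s, x)) * (Dxc U 1 (s, x)) ^ 3) := by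
      refine integrable_of_decay ((hf2.continuous.comp (contDx 0 s)).mul
        ((contDx 1 s).pow 3)) (K := (C1 + C1') * (M2 * (C1 * C1))) fun x => ?_
      have e : deriv (deriv f) (U (s, x)) * (Dxc U 1 (s, x)) ^ 3
          = Dxc U 1 (s, x) * (deriv (deriv f) (U (s, x)) * (Dxc U 1 (s, x)) ^ 2) := by ring
      rw [e]
      refine decay_mul_bound (B1 s hs x) (B1' s hs x) ?_
      rw [abs_mul, abs_pow]
      have h2 : |Dxc U 1 (s, x)| ^ 2 ≤ C1 * C1 := by
        rw [pow_two]
        exact mul_le_mul (B1 s hs x) (B1 s hs x) (abs_nonneg _) hC1n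
      exact mul_le_mul (Bf'' s hs x) h2 (by positivity) hM2n
    -- integration by parts no. 1 : ∫ (d2 w + d1 e) = 0
    have ibp1 : ∫ x : ℝ, (Dxc U 2 (s, x) * fderiv ℝ U (s, x) (1, 0)
        + Dxc U 1 (s, x) * fderiv ℝ (fun q : ℝ × ℝ => fderiv ℝ U q (1, 0)) (s, x) (0, 1)) = 0 := by
      refine integral_eq_zero_of_hasDerivAt_of_integrable
        (f := fun x : ℝ => Dxc U 1 (s, x) * fderiv ℝ U (s, x) (1, 0))
        (fun x => (hdx 1 s x).mul (hdw s x)) (i_d2w.add i_d1e) i_d1w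
    have I5 : (∫ x : ℝ, Dxc U 1 (s, x) *
          fderiv ℝ (fun q : ℝ × ℝ => fderiv ℝ U q (1, 0)) (s, x) (0, 1))
        = - ∫ x : ℝ, Dxc U 2 (s, x) * fderiv ℝ U (s, x) (1, 0) := by
      rw [integral_add i_d2w i_d1e] at ibp1
      linarith
    -- integration by parts no. 2 : ∫ d2 d3 = 0
    have ibp2 : ∫ x : ℝ, (2 : ℝ) * (Dxc U 2 (s, x) * Dxc U 3 (s, x)) = 0 := by
      refine integral_eq_zero_of_hasDerivAt_of_integrable
        (f := fun x : ℝ => (Dxc U 2 (s, x)) ^ 2) (fun x => ?_) (i_d2d3.const_mul 2) i_d2sq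
      have h := (hdx 2 s x).mul (hdx 2 s x)
      have e : (fun y => Dxc U 2 (s, y) * Dxc U 2 (s, y)) = fun y => (Dxc U 2 (s, y)) ^ 2 := by
        funext y; ring
      change HasDerivAt (fun y => Dxc U 2 (s, y) * Dxc U 2 (s, y)) _ x at h
      rw [e] at h
      exact h.congr_deriv (by simp only [Nat.reduceAdd]; ring)
    have I3 : ∫ x : ℝ, Dxc U 2 (s, x) * Dxc U 3 (s, x) = 0 := by
      rw [integral_const_mul] at ibp2
      linarith
    -- integration by parts no. 3 : ∫ (f'' d1³ + 2 f' d1 d2) = 0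
    have ibp3 : ∫ x : ℝ, (deriv (deriv f) (U (s, x)) * (Dxc U 1 (s, x)) ^ 3
        + 2 * (deriv f (U (s, x)) * (Dxc U 1 (s, x) * Dxc U 2 (s, x)))) = 0 := by
      refine integral_eq_zero_of_hasDerivAt_of_integrable
        (f := fun x : ℝ => deriv f (U (s, x)) * (Dxc U 1 (s, x)) ^ 2) (fun x => ?_)
        (i_B.add (i_fd1d2.const_mul 2)) i_fd1sq
      have hcomp : HasDerivAt (fun y => deriv f (U (s, y)))
          (deriv (deriv f) (U (s, x)) * Dxc U 1 (s, x)) x :=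
        by
          have hux : HasDerivAt (fun y => U (s, y)) (Dxc U 1 (s, x)) x := hdx 0 s x
          exact ((hf1.differentiable (by simp) (U (s, x))).hasDerivAt).comp x hux
      have h2 : HasDerivAt (fun y => (Dxc U 1 (s, y)) ^ 2)
          (2 * (Dxc U 1 (s, x) * Dxc U 2 (s, x))) x := by
        have h := (hdx 1 s x).mul (hdx 1 s x)
        have e : (fun y => Dxc U 1 (s, y) * Dxc U 1 (s, y)) = fun y => (Dxc U 1 (s, y)) ^ 2 := by
          funext y; ring
        change HasDerivAt (fun y => Dxc U 1 (s, y) * Dxc U 1 (s, y)) _ x at h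
        rw [e] at h
        exact h.congr_deriv (by simp only [Nat.reduceAdd]; ring)
      have := hcomp.mul h2
      exact this.congr_deriv (by ring)
    have I1 : (∫ x : ℝ, deriv (deriv f) (U (s, x)) * (Dxc U 1 (s, x)) ^ 3)
        + 2 * ∫ x : ℝ, deriv f (U (s, x)) * (Dxc U 1 (s, x) * Dxc U 2 (s, x)) = 0 := by
      rw [integral_add i_B (i_fd1d2.const_mul 2), integral_const_mul] at ibp3
      linarith
    -- splitting ∫ d2 w with the PDE
    have e4 : (fun x : ℝ => Dxc U 2 (s, x) * fderiv ℝ U (s, x) (1, 0)) = fun x : ℝ =>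
        (-(deriv f (U (s, x)) * (Dxc U 1 (s, x) * Dxc U 2 (s, x)))
          + ε * (Dxc U 2 (s, x)) ^ 2) + δ * (Dxc U 2 (s, x) * Dxc U 3 (s, x)) := by
      funext x
      rw [hpde s hs0 x]
      ring
    have I4 : (∫ x : ℝ, Dxc U 2 (s, x) * fderiv ℝ U (s, x) (1, 0))
        = -(∫ x : ℝ, deriv f (U (s, x)) * (Dxc U 1 (s, x) * Dxc U 2 (s, x)))
          + ε * (∫ x : ℝ, (Dxc U 2 (s, x)) ^ 2)
          + δ * ∫ x : ℝ, Dxc U 2 (s, x) * Dxc U 3 (s, x) := by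
      have iN : Integrable (fun x : ℝ =>
          -(deriv f (U (s, x)) * (Dxc U 1 (s, x) * Dxc U 2 (s, x)))) := i_fd1d2.neg
      have iA : Integrable (fun x : ℝ =>
          -(deriv f (U (s, x)) * (Dxc U 1 (s, x) * Dxc U 2 (s, x)))
            + ε * (Dxc U 2 (s, x)) ^ 2) := iN.add (i_d2sq.const_mul ε)
      rw [e4, integral_add iA (i_d2d3.const_mul δ), integral_add iN (i_d2sq.const_mul ε),
        integral_neg, integral_const_mul, integral_const_mul]
    -- assemble
    have efin : (fun x : ℝ => 2 * Dxc U 1 (s, x) * fderiv ℝ (Dxc U 1) (s, x) (1, 0))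
        = fun x : ℝ => 2 * (Dxc U 1 (s, x) *
            fderiv ℝ (fun q : ℝ × ℝ => fderiv ℝ U q (1, 0)) (s, x) (0, 1)) := by
      funext x
      rw [hsymm (s, x)]
      ring
    rw [efin, integral_const_mul, I5, I4, I3]
    linarith [I1]
  -- derivative of the energy integral at interior times
  have hgder : ∀ s ∈ Ioo (0:ℝ) t,
      HasDerivAt (fun r : ℝ => ∫ x : ℝ, (Dxc U 1 (r, x)) ^ 2)
        (-(2 * ε) * (∫ x : ℝ, (Dxc U 2 (s, x)) ^ 2)
          - ∫ x : ℝ, deriv (deriv f) (U (s, x)) * (Dxc U 1 (s, x)) ^ 3) s := by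
    intro s hsIoo
    have hsI : s ∈ Icc (0:ℝ) t := ⟨hsIoo.1.le, hsIoo.2.le⟩
    have hrpos : 0 < min s (t - s) := lt_min hsIoo.1 (sub_pos.2 hsIoo.2)
    have hball : Metric.ball s (min s (t - s)) ⊆ Icc (0:ℝ) t := by
      intro y hy
      rw [Metric.mem_ball, Real.dist_eq, abs_sub_lt_iff] at hy
      have h1 := min_le_left s (t - s)
      have h2 := min_le_right s (t - s)
      exact ⟨by linarith [hy.2], by linarith [hy.1]⟩
    have H := hasDerivAt_integral_of_dominated_loc_of_deriv_le (μ := volume)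
      (F := fun (r : ℝ) (x : ℝ) => (Dxc U 1 (r, x)) ^ 2)
      (F' := fun (r : ℝ) (x : ℝ) => 2 * Dxc U 1 (r, x) * fderiv ℝ (Dxc U 1) (r, x) (1, 0))
      (x₀ := s) (bound := fun x : ℝ => (C1 + C1') * (2 * CM) * (1 + x ^ 2)⁻¹)
      (Metric.ball_mem_nhds s hrpos)
      (Eventually.of_forall fun r => ((contDx 1 r).pow 2).aestronglyMeasurable)
      (by
        refine integrable_of_decay ((contDx 1 s).pow 2) (K := (C1 + C1') * C1) fun x => ?_
        show |(Dxc U 1 (s, x)) ^ 2| ≤ (C1 + C1') * C1 * (1 + x ^ 2)⁻¹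
        rw [show (Dxc U 1 (s, x)) ^ 2 = Dxc U 1 (s, x) * Dxc U 1 (s, x) from pow_two _]
        exact decay_mul_bound (B1 s hsI x) (B1' s hsI x) (B1 s hsI x))
      (((continuous_const.mul (contDx 1 s)).mul (contM s)).aestronglyMeasurable)
      (ae_of_all _ fun x r hr => by
        have hrI : r ∈ Icc (0:ℝ) t := hball hr
        have e : (2:ℝ) * Dxc U 1 (r, x) * fderiv ℝ (Dxc U 1) (r, x) (1, 0)
            = Dxc U 1 (r, x) * (2 * fderiv ℝ (Dxc U 1) (r, x) (1, 0)) := by ring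
        show |2 * Dxc U 1 (r, x) * fderiv ℝ (Dxc U 1) (r, x) (1, 0)|
          ≤ (C1 + C1') * (2 * CM) * (1 + x ^ 2)⁻¹
        rw [e]
        refine decay_mul_bound (B1 r hrI x) (B1' r hrI x) ?_
        rw [abs_mul, abs_two]
        exact mul_le_mul_of_nonneg_left (hCM r hrI x) (by norm_num))
      (integrable_inv_one_add_sq.const_mul _)
      (ae_of_all _ fun x r _ => by
        have h := (ht1 r x).mul (ht1 r x)
        have e : (fun q : ℝ => Dxc U 1 (q, x) * Dxc U 1 (q, x))
            = fun q : ℝ => (Dxc U 1 (q, x)) ^ 2 := by funext q; ring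
        change HasDerivAt (fun q : ℝ => Dxc U 1 (q, x) * Dxc U 1 (q, x)) _ r at h
        rw [e] at h
        exact h.congr_deriv (by ring))
    have h2 := H.2
    rwa [key s hsI] at h2
  -- continuity of the three integrals in time on [0, t]
  have hgcont : ContinuousOn (fun r : ℝ => ∫ x : ℝ, (Dxc U 1 (r, x)) ^ 2) (Icc (0:ℝ) t) := by
    intro s₀ _
    refine continuousWithinAt_of_dominated
      (bound := fun x : ℝ => (C1 + C1') * C1 * (1 + x ^ 2)⁻¹)
      (Eventually.of_forall fun r => ((contDx 1 r).pow 2).aestronglyMeasurable) ?_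
      (integrable_inv_one_add_sq.const_mul _) (ae_of_all _ fun x => ?_)
    · filter_upwards [self_mem_nhdsWithin] with r hr
      refine ae_of_all _ fun x => ?_
      rw [Real.norm_eq_abs, pow_two]
      exact decay_mul_bound (B1 r hr x) (B1' r hr x) (B1 r hr x)
    · exact (((hDn 1).continuous.comp
        (continuous_id.prodMk continuous_const)).pow 2).continuousWithinAt
  have hAcont : ContinuousOn (fun r : ℝ => ∫ x : ℝ, (Dxc U 2 (r, x)) ^ 2) (Icc (0:ℝ) t) := by
    intro s₀ _
    refine continuousWithinAt_of_dominated
      (bound := fun x : ℝ => (C2 + C2') * C2 * (1 + x ^ 2)⁻¹)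
      (Eventually.of_forall fun r => ((contDx 2 r).pow 2).aestronglyMeasurable) ?_
      (integrable_inv_one_add_sq.const_mul _) (ae_of_all _ fun x => ?_)
    · filter_upwards [self_mem_nhdsWithin] with r hr
      refine ae_of_all _ fun x => ?_
      rw [Real.norm_eq_abs, pow_two]
      exact decay_mul_bound (B2 r hr x) (B2' r hr x) (B2 r hr x)
    · exact (((hDn 2).continuous.comp
        (continuous_id.prodMk continuous_const)).pow 2).continuousWithinAt
  have hBcont : ContinuousOn (fun r : ℝ => ∫ x : ℝ,
      deriv (deriv f) (U (r, x)) * (Dxc U 1 (r, x)) ^ 3) (Icc (0:ℝ) t) := by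
    intro s₀ _
    refine continuousWithinAt_of_dominated
      (bound := fun x : ℝ => (C1 + C1') * (M2 * (C1 * C1)) * (1 + x ^ 2)⁻¹)
      (Eventually.of_forall fun r => ((hf2.continuous.comp (contDx 0 r)).mul
        ((contDx 1 r).pow 3)).aestronglyMeasurable) ?_
      (integrable_inv_one_add_sq.const_mul _) (ae_of_all _ fun x => ?_)
    · filter_upwards [self_mem_nhdsWithin] with r hr
      refine ae_of_all _ fun x => ?_
      rw [Real.norm_eq_abs]
      have e : deriv (deriv f) (U (r, x)) * (Dxc U 1 (r, x)) ^ 3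
          = Dxc U 1 (r, x) * (deriv (deriv f) (U (r, x)) * (Dxc U 1 (r, x)) ^ 2) := by ring
      rw [e]
      refine decay_mul_bound (B1 r hr x) (B1' r hr x) ?_
      rw [abs_mul, abs_pow]
      have h2 : |Dxc U 1 (r, x)| ^ 2 ≤ C1 * C1 := by
        rw [pow_two]
        exact mul_le_mul (B1 r hr x) (B1 r hr x) (abs_nonneg _) hC1n
      exact mul_le_mul (Bf'' r hr x) h2 (by positivity) hM2n
    · exact ((hf2.continuous.comp ((hDn 0).continuous.comp
        (continuous_id.prodMk continuous_const))).mul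
        (((hDn 1).continuous.comp (continuous_id.prodMk continuous_const)).pow
          3)).continuousWithinAt
  -- interval integrability and the fundamental theorem of calculus
  have hAi : IntervalIntegrable (fun s : ℝ => ∫ x : ℝ, (Dxc U 2 (s, x)) ^ 2) volume 0 t := by
    apply ContinuousOn.intervalIntegrable
    rwa [uIcc_of_le ht]
  have hBi : IntervalIntegrable (fun s : ℝ => ∫ x : ℝ,
      deriv (deriv f) (U (s, x)) * (Dxc U 1 (s, x)) ^ 3) volume 0 t := by
    apply ContinuousOn.intervalIntegrable
    rwa [uIcc_of_le ht]
  have hsumi : IntervalIntegrable (fun s : ℝ =>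
      -(2 * ε) * (∫ x : ℝ, (Dxc U 2 (s, x)) ^ 2)
        - ∫ x : ℝ, deriv (deriv f) (U (s, x)) * (Dxc U 1 (s, x)) ^ 3) volume 0 t :=
    (hAi.const_mul _).sub hBi
  have hFTC := intervalIntegral.integral_eq_sub_of_hasDeriv_right_of_le ht hgcont
    (fun s hsIoo => (hgder s hsIoo).hasDerivWithinAt) hsumi
  rw [intervalIntegral.integral_sub (hAi.const_mul _) hBi,
    intervalIntegral.integral_const_mul] at hFTC
  beta_reduce at hFTC
  linarith [hFTC]

theorem stmt4
    (f : ℝ → ℝ) (hf : ContDiff ℝ (⊤ : ℕ∞) f)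
    (c : ℝ) (hc : ∀ v : ℝ, |deriv f v| ≤ c)
    (ε δ : ℝ) (hε : 0 < ε) (hδ : 0 < δ)
    (u : ℝ → ℝ → ℝ) (u₀ : ℝ → ℝ)
    (hu : ContDiff ℝ (⊤ : ℕ∞) (fun p : ℝ × ℝ => u p.1 p.2))
    (hu₀s : ContDiff ℝ (⊤ : ℕ∞) u₀)
    (hpde : ∀ t ≥ (0:ℝ), ∀ x : ℝ,
      deriv (fun s => u s x) t + deriv (fun y => f (u t y)) x
        = ε * iteratedDeriv 2 (u t) x + δ * iteratedDeriv 3 (u t) x)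
    (hinit : u 0 = u₀)
    (hu₀L2 : MemLp u₀ 2 volume)
    (hu₀'L2 : MemLp (deriv u₀) 2 volume)
    (hdecay : ∀ (n m : ℕ) (T : ℝ), ∃ C : ℝ, ∀ t ∈ Set.Icc (0:ℝ) T, ∀ x : ℝ,
      |x| ^ m * |iteratedDeriv n (u t) x| ≤ C)
    (t : ℝ) (ht : 0 ≤ t) :
    (∫ x : ℝ, (deriv (u t) x) ^ 2)
        + 2 * ε * ∫ s in (0:ℝ)..t, ∫ x : ℝ, (iteratedDeriv 2 (u s) x) ^ 2
      = (∫ x : ℝ, (deriv u₀ x) ^ 2)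
        - ∫ s in (0:ℝ)..t, ∫ x : ℝ, iteratedDeriv 2 f (u s x) * (deriv (u s) x) ^ 3 := by
  have hsp : ∀ (n : ℕ) (s : ℝ), iteratedDeriv n (u s)
      = fun x => Dxc (fun p : ℝ × ℝ => u p.1 p.2) n (s, x) :=
    fun n s => iteratedDeriv_eq_Dxc hu n s
  have hd1 : ∀ s : ℝ, deriv (u s) = fun x => Dxc (fun p : ℝ × ℝ => u p.1 p.2) 1 (s, x) := by
    intro s
    have := hsp 1 s
    rwa [iteratedDeriv_one] at this
  have hit2 : iteratedDeriv 2 f = deriv (deriv f) := by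
    rw [iteratedDeriv_succ, iteratedDeriv_one]
  have hpde' : ∀ s ≥ (0:ℝ), ∀ x : ℝ, fderiv ℝ (fun p : ℝ × ℝ => u p.1 p.2) (s, x) (1, 0)
      = -(deriv f ((fun p : ℝ × ℝ => u p.1 p.2) (s, x))
            * Dxc (fun p : ℝ × ℝ => u p.1 p.2) 1 (s, x))
        + ε * Dxc (fun p : ℝ × ℝ => u p.1 p.2) 2 (s, x)
        + δ * Dxc (fun p : ℝ × ℝ => u p.1 p.2) 3 (s, x) := by
    intro s hs x
    have h0 := hpde s hs x
    have e1 : deriv (fun r => u r x) s = fderiv ℝ (fun p : ℝ × ℝ => u p.1 p.2) (s, x) (1, 0) :=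
      (hasDerivAt_slice_t hu s x).deriv
    have hux : HasDerivAt (u s) (Dxc (fun p : ℝ × ℝ => u p.1 p.2) 1 (s, x)) x :=
      hasDerivAt_slice_x hu s x
    have e2 : deriv (fun y => f (u s y)) x
        = deriv f (u s x) * Dxc (fun p : ℝ × ℝ => u p.1 p.2) 1 (s, x) :=
      (((hf.differentiable (by simp) (u s x)).hasDerivAt).comp x hux).deriv
    have e3 : iteratedDeriv 2 (u s) x = Dxc (fun p : ℝ × ℝ => u p.1 p.2) 2 (s, x) :=
      congrFun (hsp 2 s) x
    have e4 : iteratedDeriv 3 (u s) x = Dxc (fun p : ℝ × ℝ => u p.1 p.2) 3 (s, x) :=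
      congrFun (hsp 3 s) x
    rw [e1, e2, e3, e4] at h0
    linarith
  have hdec' : ∀ (n m : ℕ) (T : ℝ), ∃ C : ℝ, ∀ s ∈ Set.Icc (0:ℝ) T, ∀ x : ℝ,
      |x| ^ m * |Dxc (fun p : ℝ × ℝ => u p.1 p.2) n (s, x)| ≤ C := by
    intro n m T
    obtain ⟨C, hC⟩ := hdecay n m T
    exact ⟨C, fun s hs x => by
      rw [← congrFun (hsp n s) x]
      exact hC s hs x⟩
  have H := main_aux f hf ε δ hε hδ (fun p : ℝ × ℝ => u p.1 p.2) hu hpde' hdec' t ht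
  have e_t : (∫ x : ℝ, (deriv (u t) x) ^ 2)
      = ∫ x : ℝ, (Dxc (fun p : ℝ × ℝ => u p.1 p.2) 1 (t, x)) ^ 2 := by
    simp only [hd1 t]
  have e_0 : (∫ x : ℝ, (deriv u₀ x) ^ 2)
      = ∫ x : ℝ, (Dxc (fun p : ℝ × ℝ => u p.1 p.2) 1 (0, x)) ^ 2 := by
    rw [← hinit]
    simp only [hd1 0]
  have e_A : (∫ s in (0:ℝ)..t, ∫ x : ℝ, (iteratedDeriv 2 (u s) x) ^ 2)
      = ∫ s in (0:ℝ)..t, ∫ x : ℝ, (Dxc (fun p : ℝ × ℝ => u p.1 p.2) 2 (s, x)) ^ 2 := by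
    apply intervalIntegral.integral_congr
    intro s _
    show (∫ x : ℝ, (iteratedDeriv 2 (u s) x) ^ 2)
      = ∫ x : ℝ, (Dxc (fun p : ℝ × ℝ => u p.1 p.2) 2 (s, x)) ^ 2
    simp only [hsp 2 s]
  have e_B : (∫ s in (0:ℝ)..t, ∫ x : ℝ, iteratedDeriv 2 f (u s x) * (deriv (u s) x) ^ 3)
      = ∫ s in (0:ℝ)..t, ∫ x : ℝ, deriv (deriv f) ((fun p : ℝ × ℝ => u p.1 p.2) (s, x))
          * (Dxc (fun p : ℝ × ℝ => u p.1 p.2) 1 (s, x)) ^ 3 := by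
    apply intervalIntegral.integral_congr
    intro s _
    show (∫ x : ℝ, iteratedDeriv 2 f (u s x) * (deriv (u s) x) ^ 3)
      = ∫ x : ℝ, deriv (deriv f) ((fun p : ℝ × ℝ => u p.1 p.2) (s, x))
          * (Dxc (fun p : ℝ × ℝ => u p.1 p.2) 1 (s, x)) ^ 3
    simp only [hit2, hd1 s]
  rw [e_t, e_0, e_A, e_B]
  exact H

end KdVAux
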